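/- For x in (0,1) and parameters a, b with 1−2b not zero or a negative integer, the function y₂(x) = x^{−2b} { ₂F₁(a−2b, a−b+1/2; 1/2−b; x²) − (2(a−2b)x/(1−2b)) ₂F₁(a−2b+1, a−b+1/2; 3/2−b; x²) } satisfies x(1−x²)y'' + (2b+1 + 2x − (4a−2b+1)x²)y' + 2a(1 + 2(b−a)x)y = 0. -/

import Mathlib

/-!
Write `y₂(x) = x^{-2b} g(x)` with `g(x) = ∑ cₙ xⁿ`: the even coefficients of `g` come from
`₂F₁(a-2b, a-b+1/2; 1/2-b; x²)`, the odd ones from the second series. Substituting, the ODE for `y₂`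
becomes `x(1-x²)g'' + (α + 2x - βx²)g' + (γ - δx)g = 0`, which on Taylor coefficients is a
three-term recurrence for `cₙ`. The ratios `c₂ₘ₊₁/c₂ₘ` and `c₂ₘ₊₂/c₂ₘ₊₁` follow different
Pochhammer patterns, but because `a-b+1/2 = (a-2b) - (1/2-b) + 1` every instance of the recurrence
is a linear combination of two consecutive ratio relations. Both hypergeometric series have radius
of convergence at least `1`, so all series manipulations are termwise on `(-1, 1)`.
-/

open scoped Nat

/-- Pochhammer symbol (rising factorial). -/
noncomputable def poch (a : ℝ) (n : ℕ) : ℝ := (ascPochhammer ℝ n).eval a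

/-- Gauss hypergeometric series ₂F₁(a,b;c;z). -/
noncomputable def F (a b c z : ℝ) : ℝ :=
  ∑' n : ℕ, poch a n * poch b n / (poch c n * (n ! : ℝ)) * z ^ n

/-- The second Frobenius solution `y₂`. -/
noncomputable def y₂ (a b : ℝ) (t : ℝ) : ℝ :=
  t ^ (-(2 * b)) *
    (F (a - 2 * b) (a - b + 1/2) (1/2 - b) (t ^ 2)
      - (2 * (a - 2 * b) * t / (1 - 2 * b)) * F (a - 2 * b + 1) (a - b + 1/2) (3/2 - b) (t ^ 2))

open FormalMultilinearSeries Filter Set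
open scoped NNReal ENNReal

def derivCoeff (c : ℕ → ℝ) (n : ℕ) : ℝ := (n + 1) * c (n + 1)

def xMulCoeff (c : ℕ → ℝ) : ℕ → ℝ
  | 0 => 0
  | n + 1 => c n

section PowerSeries

variable {c : ℕ → ℝ}

theorem one_le_radius_ofScalars_iff :
    1 ≤ (ofScalars ℝ c).radius ↔ ∀ r ∈ Ioo (0 : ℝ) 1, Summable fun n ↦ ‖c n‖ * r ^ n := by
  refine ⟨fun hc r hr ↦ ?_, fun h ↦ ENNReal.le_of_forall_pos_nnreal_lt fun r hr0 hr1 ↦ ?_⟩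
  · lift r to ℝ≥0 using hr.1.le
    have hlt : (r : ℝ≥0∞) < (ofScalars ℝ c).radius := lt_of_lt_of_le (by exact_mod_cast hr.2) hc
    simpa [ofScalars_norm] using (ofScalars ℝ c).summable_norm_mul_pow hlt
  · exact (ofScalars ℝ c).le_radius_of_summable_norm
      (by simpa [ofScalars_norm] using h r ⟨hr0, by exact_mod_cast hr1⟩)

theorem summable_mul_pow_of_one_le_radius (hc : 1 ≤ (ofScalars ℝ c).radius) {x : ℝ}
    (hx : |x| < 1) : Summable fun n ↦ c n * x ^ n := by
  rcases eq_or_ne x 0 with rfl | hx0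
  · exact summable_of_ne_finset_zero (s := {0}) fun n hn ↦ by simp_all
  refine .of_norm ?_
  simpa [norm_mul, norm_pow] using one_le_radius_ofScalars_iff.1 hc |x| ⟨abs_pos.2 hx0, hx⟩

theorem hasSum_ofScalarsSum (hc : 1 ≤ (ofScalars ℝ c).radius) {x : ℝ} (hx : |x| < 1) :
    HasSum (fun n ↦ c n * x ^ n) (ofScalarsSum c x) := by
  simpa [ofScalars_sum_eq] using (summable_mul_pow_of_one_le_radius hc hx).hasSum

theorem summable_nat_mul_norm_mul_pow (hc : 1 ≤ (ofScalars ℝ c).radius) {r : ℝ}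
    (hr : r ∈ Ioo (0 : ℝ) 1) : Summable fun n ↦ n * ‖c n‖ * r ^ n := by
  obtain ⟨hr0, hr1⟩ := hr
  obtain ⟨s, hrs, hs1⟩ := exists_between hr1
  have hs0 : 0 < s := hr0.trans hrs
  have hq : ‖r / s‖ < 1 := by
    rw [Real.norm_eq_abs, abs_of_pos (div_pos hr0 hs0), div_lt_one hs0]; exact hrs
  have hbdd : ∀ᶠ n in atTop, ‖c n‖ * s ^ n ≤ 1 :=
    ((one_le_radius_ofScalars_iff.1 hc s ⟨hs0, hs1⟩).tendsto_atTop_zero).eventually_le_const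
      one_pos
  have hgeom : Summable fun n : ℕ ↦ n * (r / s) ^ n := by
    simpa using summable_pow_mul_geometric_of_norm_lt_one 1 hq
  refine .of_norm_bounded_eventually hgeom ?_
  rw [Nat.cofinite_eq_atTop]
  filter_upwards [hbdd] with n hn
  have : (n : ℝ) * ‖c n‖ * r ^ n = n * (‖c n‖ * s ^ n) * (r / s) ^ n := by
    rw [div_pow]; field_simp
  rw [Real.norm_eq_abs, abs_of_nonneg (by positivity), this]
  exact mul_le_mul_of_nonneg_right (mul_le_of_le_one_right n.cast_nonneg hn) (by positivity)

theorem one_le_radius_derivCoeff (hc : 1 ≤ (ofScalars ℝ c).radius) :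
    1 ≤ (ofScalars ℝ (derivCoeff c)).radius := by
  refine one_le_radius_ofScalars_iff.2 fun r hr ↦ ?_
  have hshift := ((summable_nat_add_iff 1).2 (summable_nat_mul_norm_mul_pow hc hr)).div_const r
  refine hshift.congr fun n ↦ ?_
  have hr0 : r ≠ 0 := hr.1.ne'
  simp only [derivCoeff, norm_mul, Real.norm_eq_abs, pow_succ]
  rw [abs_of_nonneg (by positivity : (0 : ℝ) ≤ n + 1)]
  push_cast
  field_simp

theorem hasDerivAt_ofScalarsSum (hc : 1 ≤ (ofScalars ℝ c).radius) {x : ℝ} (hx : |x| < 1) :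
    HasDerivAt (ofScalarsSum c) (ofScalarsSum (derivCoeff c) x) x := by
  obtain ⟨r, hxr, hr1⟩ := exists_between hx
  have hr0 : 0 < r := (abs_nonneg x).trans_lt hxr
  have hxmem : x ∈ Metric.ball (0 : ℝ) r := by rwa [mem_ball_zero_iff, Real.norm_eq_abs]
  have hbound : ∀ n, ∀ z ∈ Metric.ball (0 : ℝ) r,
      ‖c n * (n * z ^ (n - 1))‖ ≤ n * ‖c n‖ * r ^ n / r := by
    intro n z hz
    rw [mem_ball_zero_iff] at hz
    rcases n with _ | n
    · simp
    · rw [norm_mul, norm_mul, norm_pow, pow_succ, Nat.add_sub_cancel, RCLike.norm_natCast]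
      calc ‖c (n + 1)‖ * ((n + 1 : ℕ) * ‖z‖ ^ n) ≤ ‖c (n + 1)‖ * ((n + 1 : ℕ) * r ^ n) := by
            gcongr
        _ = _ := by field_simp
  have hu := (summable_nat_mul_norm_mul_pow hc ⟨hr0, hr1⟩).div_const r
  have hD := hasDerivAt_tsum_of_isPreconnected hu Metric.isOpen_ball
    (convex_ball (0 : ℝ) r).isPreconnected (fun n z _ ↦ (hasDerivAt_pow n z).const_mul (c n))
    hbound hxmem (summable_mul_pow_of_one_le_radius hc hx) hxmem
  have hsum : Summable fun n ↦ c n * (n * x ^ (n - 1)) :=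
    .of_norm_bounded hu fun n ↦ hbound n x hxmem
  rw [tsum_eq_zero_add' ((summable_nat_add_iff 1).2 hsum)] at hD
  simpa [ofScalarsSum_eq_tsum, derivCoeff, mul_comm, mul_left_comm] using hD

theorem HasSum.xMulCoeff {x s : ℝ} (h : HasSum (fun n ↦ c n * x ^ n) s) :
    HasSum (fun n ↦ xMulCoeff c n * x ^ n) (x * s) := by
  rw [← hasSum_nat_add_iff' 1]
  simpa [_root_.xMulCoeff, pow_succ, mul_comm, mul_left_comm] using h.mul_left x

theorem ode_ofScalarsSum_of_recurrence (hc : 1 ≤ (ofScalars ℝ c).radius)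
    {α β γ δ ε : ℝ} (h₀ : α * c 1 + γ * c 0 = 0)
    (hrec : ∀ n : ℕ, (n + 2) * (n + 1 + α) * c (n + 2) + (ε * (n + 1) + γ) * c (n + 1)
      - (n * (n - 1) + β * n + δ) * c n = 0)
    {x : ℝ} (hx : |x| < 1) :
    x * (1 - x ^ 2) * ofScalarsSum (derivCoeff (derivCoeff c)) x
      + (α + ε * x - β * x ^ 2) * ofScalarsSum (derivCoeff c) x
      + (γ - δ * x) * ofScalarsSum c x = 0 := by
  have hc' := one_le_radius_derivCoeff hc
  have h0 := hasSum_ofScalarsSum hc hx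
  have h1 := hasSum_ofScalarsSum hc' hx
  have h2 := hasSum_ofScalarsSum (one_le_radius_derivCoeff hc') hx
  have hsum := (((((h2.xMulCoeff.sub h2.xMulCoeff.xMulCoeff.xMulCoeff).add (h1.mul_left α)).add
    (h1.xMulCoeff.mul_left ε)).sub (h1.xMulCoeff.xMulCoeff.mul_left β)).add (h0.mul_left γ)).sub
    (h0.xMulCoeff.mul_left δ)
  -- the coefficient of `xⁿ` in `hsum` is `h₀` for `n = 0` and `hrec (n - 1)` otherwise
  have hzero := hsum.congr_fun (g := fun _ ↦ 0) fun n ↦ by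
    rcases n with _ | _ | _ | n <;> simp only [xMulCoeff, derivCoeff]
    · linear_combination -h₀
    · linear_combination -x * hrec 0
    · linear_combination -x ^ 2 * hrec 1
    · have := hrec (n + 2)
      push_cast at this ⊢
      linear_combination -x ^ (n + 3) * this
  linear_combination -(hasSum_zero.unique hzero)

end PowerSeries

theorem ascPochhammer_succ_eval_left (n : ℕ) (r : ℝ) :
    (ascPochhammer ℝ (n + 1)).eval r = r * (ascPochhammer ℝ n).eval (r + 1) := by
  simp [ascPochhammer_succ_left, Polynomial.eval_comp]

theorem ascPochhammer_eval_ne_zero {r : ℝ} (hr : ∀ k : ℕ, r + k ≠ 0) (n : ℕ) :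
    (ascPochhammer ℝ n).eval r ≠ 0 := by
  rw [Ne, ascPochhammer_eval_eq_zero_iff]
  rintro ⟨k, -, hk⟩
  exact hr k (by rw [hk]; ring)

theorem F_eq_tsum (a b c z : ℝ) :
    F a b c z = ∑' n, ordinaryHypergeometricCoefficient a b c n * z ^ n :=
  tsum_congr fun n ↦ by simp only [poch]; ring

theorem one_le_radius_ordinaryHypergeometricSeries (a b c : ℝ) :
    1 ≤ (ofScalars ℝ (ordinaryHypergeometricCoefficient a b c)).radius := by
  change 1 ≤ (ordinaryHypergeometricSeries ℝ a b c).radius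
  by_cases h : ∃ k : ℕ, (k : ℝ) = -a ∨ (k : ℝ) = -b ∨ (k : ℝ) = -c
  · obtain ⟨k, hk | hk | hk⟩ := h
    · rw [show a = -k by linarith, ordinaryHypergeometric_radius_top_of_neg_nat₁]; exact le_top
    · rw [show b = -k by linarith, ordinaryHypergeometric_radius_top_of_neg_nat₂]; exact le_top
    · rw [show c = -k by linarith, ordinaryHypergeometric_radius_top_of_neg_nat₃]; exact le_top
  · push Not at h
    exact (ordinaryHypergeometricSeries_radius_eq_one ℝ a b c h).ge

theorem hasSum_F (a b c : ℝ) {z : ℝ} (hz : |z| < 1) :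
    HasSum (fun n ↦ ordinaryHypergeometricCoefficient a b c n * z ^ n) (F a b c z) := by
  rw [F_eq_tsum]
  exact (summable_mul_pow_of_one_le_radius (one_le_radius_ordinaryHypergeometricSeries a b c)
    hz).hasSum

section Y2Coeff

/-- The Taylor coefficients of `₂F₁(A, A-C+1; C; x²) - (A/C) x ₂F₁(A+1, A-C+1; C+1; x²)`; for
`A = a - 2b`, `C = 1/2 - b` this is `x^{2b} y₂(x)`. -/
noncomputable def y2Coeff (A C : ℝ) (n : ℕ) : ℝ :=
  if Even n then ordinaryHypergeometricCoefficient A (A - C + 1) C (n / 2)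
  else -(A / C) * ordinaryHypergeometricCoefficient (A + 1) (A - C + 1) (C + 1) (n / 2)

variable {A C : ℝ}

theorem y2Coeff_two_mul (m : ℕ) :
    y2Coeff A C (2 * m) = ordinaryHypergeometricCoefficient A (A - C + 1) C m := by
  simp [y2Coeff]

theorem y2Coeff_two_mul_add_one (m : ℕ) :
    y2Coeff A C (2 * m + 1)
      = -(A / C) * ordinaryHypergeometricCoefficient (A + 1) (A - C + 1) (C + 1) m := by
  simp [y2Coeff, show (2 * m + 1) / 2 = m by omega]

theorem one_le_radius_y2Coeff : 1 ≤ (ofScalars ℝ (y2Coeff A C)).radius := by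
  refine one_le_radius_ofScalars_iff.2 fun r hr ↦ ?_
  have hr2 : r ^ 2 ∈ Ioo (0 : ℝ) 1 := ⟨by nlinarith [hr.1], by nlinarith [hr.1, hr.2]⟩
  refine .even_add_odd ?_ ?_
  · simpa [y2Coeff_two_mul, pow_mul] using one_le_radius_ofScalars_iff.1
      (one_le_radius_ordinaryHypergeometricSeries A (A - C + 1) C) _ hr2
  · refine ((one_le_radius_ofScalars_iff.1 (one_le_radius_ordinaryHypergeometricSeries
      (A + 1) (A - C + 1) (C + 1)) _ hr2).mul_left (‖A / C‖ * r)).congr fun m ↦ ?_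
    rw [y2Coeff_two_mul_add_one, neg_mul, norm_neg, norm_mul (A / C), pow_succ r (2 * m), pow_mul]
    ring

theorem hasSum_y2Coeff {x : ℝ} (hx : |x| < 1) :
    HasSum (fun n ↦ y2Coeff A C n * x ^ n)
      (F A (A - C + 1) C (x ^ 2) - A / C * x * F (A + 1) (A - C + 1) (C + 1) (x ^ 2)) := by
  have hx2 : |x ^ 2| < 1 := by rw [abs_pow]; exact pow_lt_one₀ (abs_nonneg x) hx two_ne_zero
  rw [sub_eq_add_neg]
  refine .even_add_odd ?_ ?_
  · simpa [y2Coeff_two_mul, pow_mul] using hasSum_F _ _ _ hx2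
  · rw [← neg_mul, ← neg_mul]
    refine ((hasSum_F (A + 1) (A - C + 1) (C + 1) hx2).mul_left (-(A / C) * x)).congr_fun
      fun m ↦ ?_
    rw [y2Coeff_two_mul_add_one, pow_succ, pow_mul]
    ring

theorem y2Coeff_even_step (hC : ∀ k : ℕ, C + k ≠ 0) (m : ℕ) :
    (C + m) * y2Coeff A C (2 * m + 1) + (A + m) * y2Coeff A C (2 * m) = 0 := by
  have hA : A * (ascPochhammer ℝ m).eval (A + 1) = (ascPochhammer ℝ m).eval A * (A + m) := by
    rw [← ascPochhammer_succ_eval_left, ascPochhammer_succ_eval]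
  have hC' : C * (ascPochhammer ℝ m).eval (C + 1) = (ascPochhammer ℝ m).eval C * (C + m) := by
    rw [← ascPochhammer_succ_eval_left, ascPochhammer_succ_eval]
  have hC0 : C ≠ 0 := by simpa using hC 0
  have hP : (ascPochhammer ℝ m).eval C ≠ 0 := ascPochhammer_eval_ne_zero hC m
  have hP1 : (ascPochhammer ℝ m).eval (C + 1) ≠ 0 :=
    ascPochhammer_eval_ne_zero (fun k h ↦ hC (k + 1) (by push_cast; linarith)) m
  rw [y2Coeff_two_mul_add_one, y2Coeff_two_mul]
  field_simp
  linear_combination (ascPochhammer ℝ m).eval (A - C + 1) *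
    (-(C + m) * (ascPochhammer ℝ m).eval C * hA + (A + m) * (ascPochhammer ℝ m).eval A * hC')

theorem y2Coeff_odd_step (m : ℕ) :
    (m + 1) * y2Coeff A C (2 * (m + 1)) + (A - C + 1 + m) * y2Coeff A C (2 * m + 1) = 0 := by
  rw [y2Coeff_two_mul_add_one, y2Coeff_two_mul]
  simp only [ordinaryHypergeometricCoefficient, ascPochhammer_succ_eval_left (r := A),
    ascPochhammer_succ_eval_left (r := C), ascPochhammer_succ_eval (k := A - C + 1),
    Nat.factorial_succ]
  push_cast
  field_simp
  ring

theorem y2Coeff_recurrence (hC : ∀ k : ℕ, C + k ≠ 0) (n : ℕ) :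
    (n + 2) * (n + 1 + 2 * C) * y2Coeff A C (n + 2) + (2 * (n + 1) + 2 * A) * y2Coeff A C (n + 1)
      - (n * (n - 1) + (4 * A - 2 * C + 2) * n + 2 * A * (2 * A - 2 * C + 1)) * y2Coeff A C n
      = 0 := by
  obtain ⟨m, rfl | rfl⟩ := Nat.even_or_odd' n
  · rw [show 2 * m + 2 = 2 * (m + 1) by ring]
    push_cast
    linear_combination 2 * (2 * m + 1 + 2 * C) * y2Coeff_odd_step m
      - 2 * (2 * m + 2 * A - 2 * C + 1) * y2Coeff_even_step hC m
  · rw [show 2 * m + 1 + 2 = 2 * (m + 1) + 1 by ring, show 2 * m + 1 + 1 = 2 * (m + 1) by ring]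
    have h := y2Coeff_even_step (A := A) hC (m + 1)
    push_cast at h ⊢
    linear_combination 2 * (2 * m + 3) * h - 2 * (2 * m + 1 + 2 * A) * y2Coeff_odd_step m

theorem ode_y2Coeff (hC : ∀ k : ℕ, C + k ≠ 0) {x : ℝ} (hx : |x| < 1) :
    x * (1 - x ^ 2) * ofScalarsSum (derivCoeff (derivCoeff (y2Coeff A C))) x
      + (2 * C + 2 * x - (4 * A - 2 * C + 2) * x ^ 2) * ofScalarsSum (derivCoeff (y2Coeff A C)) x
      + (2 * A - 2 * A * (2 * A - 2 * C + 1) * x) * ofScalarsSum (y2Coeff A C) x = 0 := by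
  have h₀ := y2Coeff_even_step (A := A) hC 0
  simp only [mul_zero, zero_add, Nat.cast_zero, add_zero] at h₀
  exact ode_ofScalarsSum_of_recurrence one_le_radius_y2Coeff (ε := 2)
    (by linear_combination 2 * h₀) (y2Coeff_recurrence hC) hx

end Y2Coeff

theorem y₂_eq_rpow_mul_ofScalarsSum (a b : ℝ) {t : ℝ} (ht : |t| < 1) :
    y₂ a b t = t ^ (-(2 * b)) * ofScalarsSum (y2Coeff (a - 2 * b) (1 / 2 - b)) t := by
  rw [y₂, (hasSum_ofScalarsSum one_le_radius_y2Coeff ht).unique (hasSum_y2Coeff ht),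
    show a - 2 * b - (1 / 2 - b) + 1 = a - b + 1 / 2 by ring,
    show 1 / 2 - b + 1 = 3 / 2 - b by ring,
    show (1 / 2 - b : ℝ) = (1 - 2 * b) / 2 by ring, div_div_eq_mul_div]
  ring

theorem deriv_and_deriv_deriv_of_eq_rpow_mul {y g g' g'' : ℝ → ℝ} {μ x : ℝ} {U : Set ℝ}
    (hU : IsOpen U) (hpos : ∀ t ∈ U, 0 < t) (hy : ∀ t ∈ U, y t = t ^ μ * g t)
    (hg : ∀ t ∈ U, HasDerivAt g (g' t) t) (hg' : ∀ t ∈ U, HasDerivAt g' (g'' t) t) (hx : x ∈ U) :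
    deriv y x = x ^ μ * (g' x + μ * g x / x) ∧
      deriv (deriv y) x = x ^ μ * (g'' x + 2 * μ * g' x / x + μ * (μ - 1) * g x / x ^ 2) := by
  have hprod : ∀ {G : ℝ → ℝ} {G' t : ℝ}, 0 < t → HasDerivAt G G' t →
      HasDerivAt (fun s ↦ s ^ μ * G s) (t ^ μ * (G' + μ * G t / t)) t := fun {G G' t} ht hG ↦ by
    refine ((Real.hasDerivAt_rpow_const (p := μ) (Or.inl ht.ne')).mul hG).congr_deriv ?_
    rw [Real.rpow_sub_one ht.ne']
    ring
  have hdy : ∀ t ∈ U, HasDerivAt y (t ^ μ * (g' t + μ * g t / t)) t := fun t ht ↦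
    (hprod (hpos t ht) (hg t ht)).congr_of_eventuallyEq
      (Filter.eventually_of_mem (hU.mem_nhds ht) hy)
  have hx0 := hpos x hx
  refine ⟨(hdy x hx).deriv, ?_⟩
  have hG := (hg' x hx).add (((hg x hx).const_mul μ).div (hasDerivAt_id' x) hx0.ne')
  have hddy := (hprod (G := fun t ↦ g' t + μ * g t / t) hx0 hG).congr_of_eventuallyEq
    (Filter.eventually_of_mem (hU.mem_nhds hx) fun t ht ↦ (hdy t ht).deriv)
  rw [hddy.deriv]
  field_simp
  ring

theorem y2_solves_ode (a b : ℝ) (hb : ∀ k : ℕ, 1 - 2 * b + (k : ℝ) ≠ 0) :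
    ∀ x ∈ Set.Ioo (0:ℝ) 1,
      x * (1 - x ^ 2) * deriv (deriv (y₂ a b)) x
        + (2 * b + 1 + 2 * x - (4 * a - 2 * b + 1) * x ^ 2) * deriv (y₂ a b) x
        + 2 * a * (1 + 2 * (b - a) * x) * y₂ a b x = 0 := by
  intro x hx
  have hC : ∀ k : ℕ, 1 / 2 - b + k ≠ 0 := fun k h ↦ hb (2 * k) (by push_cast; linarith)
  set c := y2Coeff (a - 2 * b) (1 / 2 - b)
  have hc : 1 ≤ (ofScalars ℝ c).radius := one_le_radius_y2Coeff
  have habs : ∀ t ∈ Ioo (0 : ℝ) 1, |t| < 1 := fun t ht ↦ by rw [abs_of_pos ht.1]; exact ht.2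
  have hy : ∀ t ∈ Ioo (0 : ℝ) 1, y₂ a b t = t ^ (-(2 * b)) * ofScalarsSum c t :=
    fun t ht ↦ y₂_eq_rpow_mul_ofScalarsSum a b (habs t ht)
  obtain ⟨hdy, hddy⟩ := deriv_and_deriv_deriv_of_eq_rpow_mul isOpen_Ioo (fun t ht ↦ ht.1) hy
    (fun t ht ↦ hasDerivAt_ofScalarsSum hc (habs t ht))
    (fun t ht ↦ hasDerivAt_ofScalarsSum (one_le_radius_derivCoeff hc) (habs t ht)) hx
  rw [hddy, hdy, hy x hx]
  have hode := ode_y2Coeff (A := a - 2 * b) hC (habs x hx)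
  have hx0 := hx.1.ne'
  field_simp
  linear_combination x ^ (-(2 * b)) * x * hode
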